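/- Let X_1,...,X_n be points of B(0,M) ⊂ H and f > 0. If p̂( 16 M² f / ( √(n p̂_min) · B̂ ) ) ≤ p̂_min, then the sample X_1,...,X_n is f-clusterable. -/

import Mathlib

open MeasureTheory Metric
open scoped Classical ENNReal NNReal BigOperators RealInnerProductSpace

noncomputable section

namespace Kmeans


variable {H : Type*} [NormedAddCommGroup H] [InnerProductSpace ℝ H]
  [MeasurableSpace H]

/-- Distortion of a codebook `c` with respect to the measure `P`. -/
def distortion (P : Measure H) (k : ℕ) (c : Fin k → H) : ℝ :=
  ∫ x, (⨅ j : Fin k, ‖x - c j‖ ^ 2) ∂P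

/-- The `j`-th closed Voronoi cell of the codebook `c`. -/
def voronoi (k : ℕ) (c : Fin k → H) (j : Fin k) : Set H :=
  {x : H | ∀ i : Fin k, ‖x - c j‖ ≤ ‖x - c i‖}

/-- The set `𝓜` of optimal codebooks, i.e. minimizers of the distortion. -/
def optimal (P : Measure H) (k : ℕ) : Set (Fin k → H) :=
  {c | ∀ c' : Fin k → H, distortion P k c ≤ distortion P k c'}

/-- `B`: minimal separation between two codepoints of an optimal codebook. -/
def Bsep (P : Measure H) (k : ℕ) : ℝ :=
  sInf {r : ℝ | ∃ c ∈ optimal P k, ∃ i j : Fin k, i ≠ j ∧ r = ‖c i - c j‖}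

/-- `p_min`: minimal mass of a Voronoi cell of an optimal codebook. -/
def pmin (P : Measure H) (k : ℕ) : ℝ :=
  sInf {r : ℝ | ∃ c ∈ optimal P k, ∃ j : Fin k, r = (P (voronoi k c j)).toReal}

/-- `N(c)`: the skeleton of the Voronoi diagram of `c`. -/
def Ncrit (k : ℕ) (c : Fin k → H) : Set H :=
  ⋃ (i : Fin k) (j : Fin k) (_ : i ≠ j), {x : H | ‖x - c i‖ = ‖x - c j‖}

/-- `p(t)`: maximal mass of the `t`-neighborhood of the skeleton of an optimal codebook. -/
def pweight (P : Measure H) (k : ℕ) (t : ℝ) : ℝ :=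
  sSup {r : ℝ | ∃ c ∈ optimal P k, r = (P {x : H | infDist x (Ncrit k c) ≤ t}).toReal}

/-- `P` is `M`-bounded: its support is contained in the closed ball of radius `M`. -/
def MBounded (P : Measure H) (M : ℝ) : Prop :=
  P (closedBall (0 : H) M) = 1

/-- The support of `P` contains more than `k` points. -/
def SupportMoreThan (P : Measure H) (k : ℕ) : Prop :=
  ∃ S : Finset H, k < S.card ∧ ∀ x ∈ S, ∀ ε : ℝ, 0 < ε → 0 < P (ball x ε)

/-- The margin condition with radius `r₀`. -/
def MarginCondition (P : Measure H) (k : ℕ) (M r₀ : ℝ) : Prop :=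
  0 < r₀ ∧ MBounded P M ∧
    ∀ t : ℝ, 0 ≤ t → t ≤ r₀ →
      pweight P k t ≤ Bsep P k * pmin P k * t / (128 * M ^ 2)

/-- The cells `W_j(c)` forming a partition subordinated to the Voronoi diagram. -/
def Wcell (k : ℕ) (c : Fin k → H) (j : Fin k) : Set H :=
  voronoi k c j \ ⋃ (i : Fin k) (_ : i < j), voronoi k c i

/-- `𝓜‾`: codebooks satisfying the centroid condition (stationary points). -/
def stationary (P : Measure H) (k : ℕ) : Set (Fin k → H) :=
  {c | ∀ i : Fin k, (P (Wcell k c i)).toReal • c i = ∫ x in Wcell k c i, x ∂P}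

/-- `P` is `ε`-separated. -/
def Separated (P : Measure H) (k : ℕ) (ε : ℝ) : Prop :=
  ∀ c ∈ stationary P k \ optimal P k, ∀ cs ∈ optimal P k,
    ε ≤ distortion P k c - distortion P k cs

/-- Euclidean distance between codebooks. -/
def cbDist (k : ℕ) (c c' : Fin k → H) : ℝ :=
  Real.sqrt (∑ j : Fin k, ‖c j - c' j‖ ^ 2)

/-- The empirical measure of a sample. -/
def empMeasure {n : ℕ} (X : Fin n → H) : Measure H :=
  ((n : ℝ≥0∞))⁻¹ • ∑ i : Fin n, Measure.dirac (X i)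

/-- Number of optimal codebooks up to relabeling of codepoints. -/
def MbarCard (P : Measure H) (k : ℕ) : ℕ :=
  Set.ncard {s : Set (Fin k → H) |
    ∃ c ∈ optimal P k, s = {c' | ∃ π : Equiv.Perm (Fin k), c' = c ∘ π}}

/-- The mass `p_{ij}(c,t)` of a slab along the segment `[c_i, c_j]` intersected with `V_j(c)`. -/
def pij (P : Measure H) (k : ℕ) (c : Fin k → H) (i j : Fin k) (t : ℝ) : ℝ :=
  (P ({x : H |
      0 ≤ ⟪x - (2⁻¹ : ℝ) • (c i + c j), ‖c i - c j‖⁻¹ • (c j - c i)⟫ ∧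
      ⟪x - (2⁻¹ : ℝ) • (c i + c j), ‖c i - c j‖⁻¹ • (c j - c i)⟫ ≤ t} ∩
    voronoi k c j)).toReal

/-- The classification risk between two (ordered) partitions. -/
def classifRisk (P : Measure H) (k : ℕ) (C C' : Fin k → Set H) : ℝ :=
  sInf {r : ℝ | ∃ π : Equiv.Perm (Fin k),
    r = (P (⋃ j : Fin k, C (π j) ∩ (C' j)ᶜ)).toReal}

/-- A sample is `f`-clusterable. -/
def Clusterable {n : ℕ} (X : Fin n → H) (k : ℕ) (f : ℝ) : Prop :=
  ∃ c ∈ optimal (empMeasure X) k, ∀ i j : Fin k, i ≠ j →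
    f * Real.sqrt (distortion (empMeasure X) k c) *
      (1 / Real.sqrt ((Finset.univ.filter fun a => X a ∈ voronoi k c i).card) +
       1 / Real.sqrt ((Finset.univ.filter fun a => X a ∈ voronoi k c j).card))
      ≤ ‖c i - c j‖

/-- Membership in the class `𝓓(B₋, r₀₋, p₋, ε₋)` of distributions. -/
def inClassD (P : Measure H) (k : ℕ) (M Bm rm pm em : ℝ) : Prop :=
  IsProbabilityMeasure P ∧ SupportMoreThan P k ∧
    (∃ r₀ : ℝ, rm ≤ r₀ ∧ MarginCondition P k M r₀) ∧
    Bm ≤ Bsep P k ∧ pm ≤ pmin P k ∧ Separated P k em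

end Kmeans

open Kmeans

section KAuxSection

set_option linter.unusedSectionVars false
set_option linter.unusedVariables false
set_option maxHeartbeats 2000000

namespace KAux

open Kmeans Finset

variable {H : Type*} [NormedAddCommGroup H] [InnerProductSpace ℝ H]
  [MeasurableSpace H] [BorelSpace H] [SecondCountableTopology H] [CompleteSpace H]
variable {k n : ℕ} {X : Fin n → H} {M : ℝ}

/-! ### scaling into the ball -/

def scaleBall (M : ℝ) (v : H) : H := if ‖v‖ ≤ M then v else (M / ‖v‖) • v

lemma norm_scaleBall_of_gt {M : ℝ} {v : H} (h : ¬ ‖v‖ ≤ M) (hM : 0 < M) :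
    ‖scaleBall M v‖ = M := by
  push_neg at h
  have hv : 0 < ‖v‖ := lt_trans hM h
  rw [scaleBall, if_neg (not_le.mpr h), norm_smul, Real.norm_eq_abs,
    abs_of_nonneg (by positivity : (0:ℝ) ≤ M / ‖v‖), div_mul_cancel₀ _ (ne_of_gt hv)]

lemma scaleBall_mem {M : ℝ} (hM : 0 < M) (v : H) : ‖scaleBall M v‖ ≤ M := by
  by_cases h : ‖v‖ ≤ M
  · rw [scaleBall, if_pos h]; exact h
  · rw [norm_scaleBall_of_gt h hM]

lemma scaleBall_dist_le {M : ℝ} (hM : 0 < M) {x : H} (hx : ‖x‖ ≤ M) (v : H) :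
    ‖x - scaleBall M v‖ ≤ ‖x - v‖ := by
  rw [scaleBall]
  split_ifs with h
  · exact le_refl _
  · push_neg at h
    have hv : 0 < ‖v‖ := lt_trans hM h
    set t := M / ‖v‖ with ht
    have ht0 : 0 < t := by positivity
    have ht1 : t ≤ 1 := by rw [ht, div_le_one hv]; exact h.le
    have htv : t * ‖v‖ = M := by rw [ht]; field_simp
    have hinner : ⟪x, v⟫ ≤ M * ‖v‖ :=
      le_trans (real_inner_le_norm x v) (by nlinarith [norm_nonneg v])
    have hsq : ‖x - t • v‖ ^ 2 ≤ ‖x - v‖ ^ 2 := by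
      rw [norm_sub_sq_real, norm_sub_sq_real, real_inner_smul_right, norm_smul,
        Real.norm_eq_abs, abs_of_nonneg ht0.le, mul_pow]
      nlinarith [sq_nonneg (1 - t), norm_nonneg v]
    exact le_of_pow_le_pow_left₀ two_ne_zero (norm_nonneg _) hsq

lemma scaleBall_lip {M : ℝ} (hM : 0 < M) (u v : H) :
    ‖scaleBall M u - scaleBall M v‖ ≤ ‖u - v‖ := by
  by_cases hu : ‖u‖ ≤ M
  · by_cases hv : ‖v‖ ≤ M
    · rw [scaleBall, if_pos hu, scaleBall, if_pos hv]
    · rw [scaleBall, if_pos hu]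
      exact scaleBall_dist_le hM hu v
  · by_cases hv : ‖v‖ ≤ M
    · rw [show scaleBall M v = v from by rw [scaleBall, if_pos hv], norm_sub_rev,
        norm_sub_rev u v]
      exact scaleBall_dist_le hM hv u
    · push_neg at hu hv
      have hu0 : 0 < ‖u‖ := lt_trans hM hu
      have hv0 : 0 < ‖v‖ := lt_trans hM hv
      rw [show scaleBall M u = (M / ‖u‖) • u from by rw [scaleBall, if_neg (not_le.mpr hu)],
        show scaleBall M v = (M / ‖v‖) • v from by rw [scaleBall, if_neg (not_le.mpr hv)]]
      set s := M / ‖u‖ with hs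
      set t := M / ‖v‖ with htdef
      have hs0 : 0 < s := by positivity
      have ht0 : 0 < t := by positivity
      have hsu : s * ‖u‖ = M := by rw [hs]; field_simp
      have htv : t * ‖v‖ = M := by rw [htdef]; field_simp
      have hst : s * t ≤ 1 := by
        rw [hs, htdef, div_mul_div_comm, div_le_one (by positivity)]
        nlinarith
      have hinner : ⟪u, v⟫ ≤ ‖u‖ * ‖v‖ := real_inner_le_norm u v
      have hsq : ‖s • u - t • v‖ ^ 2 ≤ ‖u - v‖ ^ 2 := by
        rw [norm_sub_sq_real, norm_sub_sq_real, real_inner_smul_right,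
          real_inner_smul_left, norm_smul, norm_smul, Real.norm_eq_abs, Real.norm_eq_abs,
          abs_of_nonneg hs0.le, abs_of_nonneg ht0.le, mul_pow, mul_pow]
        nlinarith [sq_nonneg (‖u‖ - ‖v‖), mul_pos hu0 hv0,
          mul_nonneg (mul_nonneg hs0.le ht0.le) (sub_nonneg.mpr hinner)]
      exact le_of_pow_le_pow_left₀ two_ne_zero (norm_nonneg _) hsq

/-! ### empirical measure and distortion -/

lemma gcont (hk : 1 ≤ k) (c : Fin k → H) :
    Continuous fun x : H => ⨅ j : Fin k, ‖x - c j‖ ^ 2 := by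
  haveI : Nonempty (Fin k) := ⟨⟨0, hk⟩⟩
  have h := Continuous.finset_inf'_apply (s := (Finset.univ : Finset (Fin k)))
    (f := fun j (x : H) => ‖x - c j‖ ^ 2) Finset.univ_nonempty
    (fun j _ => by continuity)
  convert h using 2 with x
  exact (Finset.inf'_univ_eq_ciInf _).symm

lemma gbdd (c : Fin k → H) (x : H) :
    BddBelow (Set.range fun j : Fin k => ‖x - c j‖ ^ 2) := by
  refine ⟨0, ?_⟩
  rintro r ⟨j, rfl⟩
  positivity

lemma gnonneg (hk : 1 ≤ k) (c : Fin k → H) (x : H) :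
    0 ≤ ⨅ j : Fin k, ‖x - c j‖ ^ 2 := by
  haveI : Nonempty (Fin k) := ⟨⟨0, hk⟩⟩
  exact le_ciInf fun j => by positivity

lemma g_le (c : Fin k → H) (x : H) (j : Fin k) :
    (⨅ j : Fin k, ‖x - c j‖ ^ 2) ≤ ‖x - c j‖ ^ 2 :=
  ciInf_le (gbdd c x) j

lemma empMeasure_apply (hn : 1 ≤ n) {S : Set H} (hS : MeasurableSet S) :
    empMeasure X S = ((Finset.univ.filter fun a => X a ∈ S).card : ℝ≥0∞) / n := by
  rw [empMeasure, Measure.smul_apply, Measure.finset_sum_apply]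
  simp only [Measure.dirac_apply' _ hS]
  rw [smul_eq_mul, mul_comm, ENNReal.div_eq_inv_mul, mul_comm]
  congr 1
  rw [Finset.card_filter]
  push_cast
  refine Finset.sum_congr rfl fun a _ => ?_
  by_cases h : X a ∈ S <;> simp [h, Set.indicator]

lemma empMeasure_toReal (hn : 1 ≤ n) {S : Set H} (hS : MeasurableSet S) :
    (empMeasure X S).toReal = ((Finset.univ.filter fun a => X a ∈ S).card : ℝ) / n := by
  rw [empMeasure_apply hn hS, ENNReal.toReal_div]
  simp

lemma empMeasure_le_one (hn : 1 ≤ n) (S : Set H) : empMeasure X S ≤ 1 := by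
  have h1 : empMeasure X Set.univ = 1 := by
    rw [empMeasure_apply hn MeasurableSet.univ]
    simp only [Set.mem_univ, Finset.filter_true, Finset.card_univ, Fintype.card_fin]
    rw [ENNReal.div_self (by positivity) (by simp)]
  calc empMeasure X S ≤ empMeasure X Set.univ := measure_mono (Set.subset_univ S)
    _ = 1 := h1

lemma empMeasure_toReal_le_one (hn : 1 ≤ n) (S : Set H) : (empMeasure X S).toReal ≤ 1 := by
  have := empMeasure_le_one (X := X) hn S
  exact ENNReal.toReal_le_of_le_ofReal zero_le_one (by simpa using this)

lemma distortion_eq (hk : 1 ≤ k) (hn : 1 ≤ n) (c : Fin k → H) :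
    distortion (empMeasure X) k c
      = (n : ℝ)⁻¹ * ∑ a : Fin n, ⨅ j : Fin k, ‖X a - c j‖ ^ 2 := by
  have hcont := gcont hk c
  rw [distortion, empMeasure, integral_smul_measure,
    integral_finset_sum_measure (fun i _ => ?_)]
  · simp only [integral_dirac]
    rw [ENNReal.toReal_inv]
    simp
  · refine ⟨hcont.aestronglyMeasurable, ?_⟩
    rw [hasFiniteIntegral_iff_norm, lintegral_dirac]
    exact ENNReal.ofReal_lt_top

lemma distortion_nonneg (hk : 1 ≤ k) (hn : 1 ≤ n) (c : Fin k → H) :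
    0 ≤ distortion (empMeasure X) k c := by
  rw [distortion_eq hk hn]
  have : (0:ℝ) ≤ (n:ℝ)⁻¹ := by positivity
  exact mul_nonneg this (Finset.sum_nonneg fun a _ => gnonneg hk c (X a))

lemma voronoi_measurable (c : Fin k → H) (j : Fin k) :
    MeasurableSet (voronoi k c j) := by
  have : IsClosed (voronoi k c j) := by
    have : voronoi k c j = ⋂ i : Fin k, {x : H | ‖x - c j‖ ≤ ‖x - c i‖} := by
      ext x; simp [voronoi, Set.mem_iInter]
    rw [this]
    refine isClosed_iInter fun i => ?_
    exact isClosed_le (by continuity) (by continuity)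
  exact this.measurableSet

/-! ### improvement lemmas -/

lemma improve (hk : 1 ≤ k) (hn : 1 ≤ n) {c : Fin k → H}
    (hc : c ∈ optimal (empMeasure X) k) {ℓ : Fin k}
    (hstar : ∀ a : Fin n, ∃ m, m ≠ ℓ ∧ ∀ r, ‖X a - c m‖ ≤ ‖X a - c r‖) :
    distortion (empMeasure X) k c ≤ 0 := by
  haveI : Nonempty (Fin k) := ⟨⟨0, hk⟩⟩
  by_contra hpos
  push_neg at hpos
  rw [distortion_eq hk hn] at hpos
  have hnpos : (0:ℝ) < (n:ℝ)⁻¹ := by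
    have : (0:ℝ) < (n:ℝ) := by exact_mod_cast hn
    positivity
  have hsum : 0 < ∑ a : Fin n, ⨅ j : Fin k, ‖X a - c j‖ ^ 2 := by
    nlinarith [hpos]
  obtain ⟨a₀, -, ha₀⟩ : ∃ a₀ ∈ Finset.univ, 0 < ⨅ j : Fin k, ‖X a₀ - c j‖ ^ 2 := by
    by_contra hno
    push_neg at hno
    have : ∑ a : Fin n, ⨅ j : Fin k, ‖X a - c j‖ ^ 2 ≤ 0 :=
      Finset.sum_nonpos fun a _ => hno a (Finset.mem_univ a)
    linarith
  set c' := Function.update c ℓ (X a₀) with hc'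
  have hle : ∀ b : Fin n, (⨅ j : Fin k, ‖X b - c' j‖ ^ 2) ≤ ⨅ j : Fin k, ‖X b - c j‖ ^ 2 := by
    intro b
    obtain ⟨m, hmℓ, hm⟩ := hstar b
    have h1 : (⨅ j : Fin k, ‖X b - c' j‖ ^ 2) ≤ ‖X b - c' m‖ ^ 2 := g_le c' (X b) m
    rw [hc', Function.update_of_ne hmℓ] at h1
    refine h1.trans (le_ciInf fun r => ?_)
    have := hm r
    nlinarith [norm_nonneg (X b - c m), norm_nonneg (X b - c r)]
  have hstrict : (⨅ j : Fin k, ‖X a₀ - c' j‖ ^ 2) < ⨅ j : Fin k, ‖X a₀ - c j‖ ^ 2 := by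
    have h1 : (⨅ j : Fin k, ‖X a₀ - c' j‖ ^ 2) ≤ ‖X a₀ - c' ℓ‖ ^ 2 := g_le c' (X a₀) ℓ
    rw [hc', Function.update_self] at h1
    simpa using lt_of_le_of_lt (by simpa using h1) ha₀
  have : distortion (empMeasure X) k c' < distortion (empMeasure X) k c := by
    rw [distortion_eq hk hn, distortion_eq hk hn]
    apply mul_lt_mul_of_pos_left _ hnpos
    exact Finset.sum_lt_sum (fun b _ => hle b) ⟨a₀, Finset.mem_univ a₀, hstrict⟩
  exact absurd (hc c') (not_le.mpr this)

lemma cell_nonempty (hk : 1 ≤ k) (hn : 1 ≤ n) {c : Fin k → H}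
    (hc : c ∈ optimal (empMeasure X) k) (hpos : 0 < distortion (empMeasure X) k c)
    (ℓ : Fin k) : ∃ a : Fin n, X a ∈ voronoi k c ℓ := by
  haveI : Nonempty (Fin k) := ⟨⟨0, hk⟩⟩
  by_contra hno
  push_neg at hno
  have hstar : ∀ a : Fin n, ∃ m, m ≠ ℓ ∧ ∀ r, ‖X a - c m‖ ≤ ‖X a - c r‖ := by
    intro a
    obtain ⟨m, -, hm⟩ := Finset.exists_min_image Finset.univ
      (fun j => ‖X a - c j‖) Finset.univ_nonempty
    have hnot := hno a
    rw [voronoi, Set.mem_setOf_eq] at hnot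
    push_neg at hnot
    obtain ⟨r, hr⟩ := hnot
    refine ⟨m, fun hmeq => ?_, fun r' => hm r' (Finset.mem_univ r')⟩
    exact absurd (hm r (Finset.mem_univ r)) (by rw [hmeq]; exact not_le.mpr hr)
  linarith [improve hk hn hc hstar]

lemma centers_ne (hk : 1 ≤ k) (hn : 1 ≤ n) {c : Fin k → H}
    (hc : c ∈ optimal (empMeasure X) k) (hpos : 0 < distortion (empMeasure X) k c)
    {i j : Fin k} (hij : i ≠ j) : c i ≠ c j := by
  haveI : Nonempty (Fin k) := ⟨⟨0, hk⟩⟩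
  intro heq
  have hstar : ∀ a : Fin n, ∃ m, m ≠ j ∧ ∀ r, ‖X a - c m‖ ≤ ‖X a - c r‖ := by
    intro a
    obtain ⟨m, -, hm⟩ := Finset.exists_min_image Finset.univ
      (fun j' => ‖X a - c j'‖) Finset.univ_nonempty
    by_cases hmj : m = j
    · exact ⟨i, hij, fun r => by rw [heq, ← hmj]; exact hm r (Finset.mem_univ r)⟩
    · exact ⟨m, hmj, fun r => hm r (Finset.mem_univ r)⟩
  linarith [improve hk hn hc hstar]

/-! ### existence of optimal codebooks and attainment of the separation -/

lemma opt_package (hk : 1 ≤ k) (hn : 1 ≤ n) (hM : 0 < M)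
    (hX : ∀ a : Fin n, ‖X a‖ ≤ M) :
    ∃ cs ∈ optimal (empMeasure X) k, (∀ j, ‖cs j‖ ≤ M) ∧
      (∀ i₀ j₀ : Fin k, i₀ ≠ j₀ →
        ∃ ch ∈ optimal (empMeasure X) k, ∃ i' j' : Fin k, i' ≠ j' ∧
          ∀ c ∈ optimal (empMeasure X) k, ∀ i'' j'' : Fin k, i'' ≠ j'' →
            ‖ch i' - ch j'‖ ≤ ‖c i'' - c j''‖) := by
  classical
  haveI : Nonempty (Fin k) := ⟨⟨0, hk⟩⟩
  set P := empMeasure X with hP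
  set V : Submodule ℝ H := Submodule.span ℝ (Set.range X) with hV
  haveI : FiniteDimensional ℝ V := FiniteDimensional.span_of_finite ℝ (Set.finite_range X)
  set pv : H → H := fun v => (V.orthogonalProjectionOnto v : H) with hpv
  have hpv_le : ∀ (x : H), x ∈ V → ∀ v : H, ‖x - pv v‖ ≤ ‖x - v‖ := by
    intro x hx v
    have hmem : pv v ∈ V := (V.orthogonalProjectionOnto v).2
    have horth : v - pv v ∈ Vᗮ := V.sub_starProjection_mem_orthogonal v
    have hinner : ⟪x - pv v, pv v - v⟫ = 0 := by
      have hx2 : x - pv v ∈ V := sub_mem hx hmem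
      have h0 : ⟪x - pv v, v - pv v⟫ = 0 :=
        (Submodule.mem_orthogonal V (v - pv v)).mp horth _ hx2
      have : pv v - v = -(v - pv v) := by abel
      rw [this, inner_neg_right, h0, neg_zero]
    have hsq : ‖x - v‖ ^ 2 = ‖x - pv v‖ ^ 2 + ‖pv v - v‖ ^ 2 := by
      have hdecomp : x - v = (x - pv v) + (pv v - v) := by abel
      rw [hdecomp, norm_add_sq_real, hinner]
      ring
    have h2 : ‖x - pv v‖ ^ 2 ≤ ‖x - v‖ ^ 2 := by nlinarith [sq_nonneg (‖pv v - v‖)]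
    exact le_of_pow_le_pow_left₀ two_ne_zero (norm_nonneg _) h2
  have hpv_lip : ∀ u v : H, ‖pv u - pv v‖ ≤ ‖u - v‖ := by
    intro u v
    have h1 : pv u - pv v = ((V.orthogonalProjectionOnto u - V.orthogonalProjectionOnto v : V) : H) := by
      simp [hpv]
    rw [h1, ← map_sub]
    calc ‖((V.orthogonalProjectionOnto (u - v) : V) : H)‖
        = ‖V.orthogonalProjectionOnto (u - v)‖ := rfl
      _ ≤ ‖V.orthogonalProjectionOnto (𝕜 := ℝ)‖ * ‖u - v‖ :=
          (V.orthogonalProjectionOnto).le_opNorm (u - v)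
      _ ≤ 1 * ‖u - v‖ := by
          exact mul_le_mul_of_nonneg_right (V.orthogonalProjectionOnto_norm_le) (norm_nonneg _)
      _ = ‖u - v‖ := one_mul _
  set Φ : (Fin k → H) → (Fin k → H) := fun c j => scaleBall M (pv (c j)) with hΦ
  have hXV : ∀ a : Fin n, X a ∈ V := fun a => Submodule.subset_span ⟨a, rfl⟩
  have hΦpt : ∀ (c : Fin k → H) (j : Fin k) (a : Fin n), ‖X a - Φ c j‖ ≤ ‖X a - c j‖ :=
    fun c j a => (scaleBall_dist_le hM (hX a) (pv (c j))).trans (hpv_le _ (hXV a) _)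
  have hΦdist : ∀ c, distortion P k (Φ c) ≤ distortion P k c := by
    intro c
    rw [hP, distortion_eq hk hn, distortion_eq hk hn]
    refine mul_le_mul_of_nonneg_left (Finset.sum_le_sum fun a _ => ?_) (by positivity)
    refine ciInf_mono (gbdd _ _) fun j => ?_
    have := hΦpt c j a
    nlinarith [norm_nonneg (X a - Φ c j), norm_nonneg (X a - c j)]
  have hΦlip : ∀ (c : Fin k → H) (i j : Fin k), ‖Φ c i - Φ c j‖ ≤ ‖c i - c j‖ :=
    fun c i j => (scaleBall_lip hM _ _).trans (hpv_lip _ _)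
  set S0 : Set H := (V : Set H) ∩ closedBall (0 : H) M with hS0def
  have hS0 : IsCompact S0 := by
    have h1 : IsCompact (closedBall (0 : V) M) := isCompact_closedBall _ _
    have h2 : IsCompact ((Subtype.val : V → H) '' closedBall (0 : V) M) :=
      h1.image continuous_subtype_val
    have heq : S0 = (Subtype.val : V → H) '' closedBall (0 : V) M := by
      ext x
      constructor
      · rintro ⟨hxV, hxB⟩
        exact ⟨⟨x, hxV⟩, by simpa [mem_closedBall_zero_iff] using
          (mem_closedBall_zero_iff.mp hxB), rfl⟩
      · rintro ⟨y, hy, rfl⟩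
        exact ⟨y.2, by simpa [mem_closedBall_zero_iff] using mem_closedBall_zero_iff.mp hy⟩
    rw [heq]; exact h2
  set K : Set (Fin k → H) := Set.pi Set.univ (fun _ : Fin k => S0) with hKdef
  have hK : IsCompact K := isCompact_univ_pi fun _ => hS0
  have hKne : K.Nonempty := ⟨fun _ => 0, fun j _ => ⟨V.zero_mem, by simp [hM.le]⟩⟩
  have hcontD : Continuous fun c : Fin k → H => distortion P k c := by
    have heq : (fun c : Fin k → H => distortion P k c)
        = fun c => (n : ℝ)⁻¹ * ∑ a : Fin n, ⨅ j : Fin k, ‖X a - c j‖ ^ 2 := by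
      funext c; rw [hP]; exact distortion_eq hk hn c
    rw [heq]
    refine continuous_const.mul (continuous_finset_sum _ fun a _ => ?_)
    have h := Continuous.finset_inf'_apply (s := (Finset.univ : Finset (Fin k)))
      (f := fun (j : Fin k) (c : Fin k → H) => ‖X a - c j‖ ^ 2) Finset.univ_nonempty
      (fun j _ => ((continuous_const.sub (continuous_apply j)).norm.pow 2))
    convert h using 2 with c
    exact (Finset.inf'_univ_eq_ciInf _).symm
  have hΦK : ∀ c, Φ c ∈ K := by
    intro c j _
    have hw : pv (c j) ∈ V := (V.orthogonalProjectionOnto (c j)).2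
    refine ⟨?_, mem_closedBall_zero_iff.mpr (scaleBall_mem hM _)⟩
    rw [hΦ]
    simp only
    rw [scaleBall]
    split_ifs
    · exact hw
    · exact V.smul_mem _ hw
  obtain ⟨cs, hcsK, hcsmin⟩ := hK.exists_isMinOn hKne hcontD.continuousOn
  have hcs_opt : cs ∈ optimal P k := by
    intro c'
    exact (isMinOn_iff.mp hcsmin _ (hΦK c')).trans (hΦdist c')
  have hclosed : IsClosed (optimal P k) := by
    have heq : optimal P k = ⋂ c' : Fin k → H,
        {c : Fin k → H | distortion P k c ≤ distortion P k c'} := by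
      ext c; simp [optimal, Set.mem_iInter]
    rw [heq]
    exact isClosed_iInter fun c' => isClosed_le hcontD continuous_const
  refine ⟨cs, hcs_opt, fun j => mem_closedBall_zero_iff.mp (hcsK j (Set.mem_univ j)).2, ?_⟩
  intro i₀ j₀ hij
  have hod : (Finset.univ.offDiag : Finset (Fin k × Fin k)).Nonempty :=
    ⟨(i₀, j₀), Finset.mem_offDiag.mpr ⟨Finset.mem_univ _, Finset.mem_univ _, hij⟩⟩
  have hgcont : Continuous (fun c : Fin k → H =>
      Finset.univ.offDiag.inf' hod fun p => ‖c p.1 - c p.2‖) := by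
    have h := Continuous.finset_inf'_apply (s := (Finset.univ.offDiag : Finset (Fin k × Fin k)))
      (f := fun (p : Fin k × Fin k) (c : Fin k → H) => ‖c p.1 - c p.2‖) hod
      (fun p _ => ((continuous_apply p.1).sub (continuous_apply p.2)).norm)
    exact h
  have hO : IsCompact (K ∩ optimal P k) := hK.inter_right hclosed
  have hOne : (K ∩ optimal P k).Nonempty := ⟨cs, hcsK, hcs_opt⟩
  obtain ⟨ch, hchO, hchmin⟩ := hO.exists_isMinOn hOne hgcont.continuousOn
  obtain ⟨p, hp, hgch⟩ := Finset.exists_mem_eq_inf' hod (fun p => ‖ch p.1 - ch p.2‖)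
  have hpne : p.1 ≠ p.2 := (Finset.mem_offDiag.mp hp).2.2
  refine ⟨ch, hchO.2, p.1, p.2, hpne, ?_⟩
  intro c hc i'' j'' hne
  have hΦO : Φ c ∈ K ∩ optimal P k := ⟨hΦK c, fun c'' => (hΦdist c).trans (hc c'')⟩
  have h1 : (Finset.univ.offDiag.inf' hod fun p => ‖ch p.1 - ch p.2‖)
      ≤ Finset.univ.offDiag.inf' hod fun p => ‖Φ c p.1 - Φ c p.2‖ :=
    isMinOn_iff.mp hchmin _ hΦO
  have h2 : (Finset.univ.offDiag.inf' hod fun p => ‖Φ c p.1 - Φ c p.2‖)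
      ≤ ‖Φ c i'' - Φ c j''‖ :=
    Finset.inf'_le (b := (i'', j'')) (fun p : Fin k × Fin k => ‖Φ c p.1 - Φ c p.2‖)
      (Finset.mem_offDiag.mpr ⟨Finset.mem_univ _, Finset.mem_univ _, hne⟩)
  rw [← hgch]
  exact h1.trans (h2.trans (hΦlip c i'' j''))

end KAux

end KAuxSection


variable {H : Type*} [NormedAddCommGroup H] [InnerProductSpace ℝ H]
  [MeasurableSpace H] [BorelSpace H] [SecondCountableTopology H] [CompleteSpace H]

set_option maxHeartbeats 2000000 in
/-- an empirical margin-type condition implies that the sample is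
`f`-clusterable. -/
theorem clusterable_of_empirical_margin
    (k n : ℕ) (hk : 1 ≤ k) (hn : 1 ≤ n) (M : ℝ) (hM : 0 < M)
    (X : Fin n → H) (hX : ∀ a : Fin n, X a ∈ closedBall (0 : H) M)
    (f : ℝ) (hf : 0 < f)
    (h : pweight (empMeasure X) k
          (16 * M ^ 2 * f /
            (Real.sqrt ((n : ℝ) * pmin (empMeasure X) k) * Bsep (empMeasure X) k)) ≤
        pmin (empMeasure X) k) :
    Clusterable X k f := by
  classical
  haveI : Nonempty (Fin k) := ⟨⟨0, hk⟩⟩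
  have hnR : (0:ℝ) < (n:ℝ) := by exact_mod_cast hn
  have hXn : ∀ a : Fin n, ‖X a‖ ≤ M := fun a => mem_closedBall_zero_iff.mp (hX a)
  obtain ⟨cs, hcs_opt, hcs_ball, hBatt⟩ := KAux.opt_package hk hn hM hXn
  refine ⟨cs, hcs_opt, ?_⟩
  intro i j hij
  by_cases hR0 : distortion (empMeasure X) k cs ≤ 0
  · rw [Real.sqrt_eq_zero_of_nonpos hR0]
    simpa using norm_nonneg (cs i - cs j)
  push_neg at hR0
  set P := empMeasure X with hPdef
  set R := distortion P k cs with hRdef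
  set pm := pmin P k with hpmdef
  set B := Bsep P k with hBdef
  have hdist_opt_eq : ∀ c ∈ optimal P k, distortion P k c = R :=
    fun c hc => le_antisymm (hc cs) (hcs_opt c)
  -- pmin is at most each cell mass
  have hpm_le : ∀ c ∈ optimal P k, ∀ ℓ : Fin k, pm ≤ (P (voronoi k c ℓ)).toReal := by
    intro c hc ℓ
    refine csInf_le ⟨0, ?_⟩ ⟨c, hc, ℓ, rfl⟩
    rintro r ⟨c', h', ℓ', rfl⟩
    exact ENNReal.toReal_nonneg
  -- pmin is at least 1/n
  have hpm_ge : (1:ℝ)/n ≤ pm := by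
    refine le_csInf ⟨(P (voronoi k cs ⟨0, hk⟩)).toReal, cs, hcs_opt, ⟨0, hk⟩, rfl⟩ ?_
    rintro r ⟨c, hc, ℓ, rfl⟩
    have hposc : 0 < distortion P k c := by rw [hdist_opt_eq c hc]; exact hR0
    obtain ⟨a, ha⟩ := KAux.cell_nonempty hk hn hc hposc ℓ
    rw [KAux.empMeasure_toReal hn (KAux.voronoi_measurable c ℓ)]
    have hcard : (1:ℝ) ≤ ((Finset.univ.filter fun a => X a ∈ voronoi k c ℓ).card : ℝ) := by
      have : a ∈ Finset.univ.filter fun a => X a ∈ voronoi k c ℓ :=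
        Finset.mem_filter.mpr ⟨Finset.mem_univ a, ha⟩
      have hpos := Finset.card_pos.mpr ⟨a, this⟩
      exact_mod_cast hpos
    gcongr
  have hpm_pos : 0 < pm := lt_of_lt_of_le (by positivity) hpm_ge
  -- Bsep at most this pair distance
  have hBle : B ≤ ‖cs i - cs j‖ := by
    refine csInf_le ⟨0, ?_⟩ ⟨cs, hcs_opt, i, j, hij, rfl⟩
    rintro r ⟨c, hc, i', j', hne, rfl⟩
    exact norm_nonneg _
  -- Bsep is positive
  have hBpos : 0 < B := by
    obtain ⟨ch, hch_opt, i', j', hij', hmin⟩ := hBatt i j hij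
    have hposc : 0 < distortion P k ch := by rw [hdist_opt_eq ch hch_opt]; exact hR0
    have hne := KAux.centers_ne hk hn hch_opt hposc hij'
    have hnorm : 0 < ‖ch i' - ch j'‖ := by
      rw [norm_pos_iff, sub_ne_zero]; exact hne
    refine lt_of_lt_of_le hnorm (le_csInf ⟨‖cs i - cs j‖, cs, hcs_opt, i, j, hij, rfl⟩ ?_)
    rintro r ⟨c, hc, i'', j'', hne'', rfl⟩
    exact hmin c hc i'' j'' hne''
  -- distortion bounded by M²
  have hRM : R ≤ M ^ 2 := by
    have h0 : R ≤ distortion P k (fun _ => (0:H)) := hcs_opt _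
    rw [hPdef, KAux.distortion_eq hk hn] at h0
    have hbound : ∑ a : Fin n, (⨅ _ : Fin k, ‖X a - (0:H)‖ ^ 2) ≤ (n:ℝ) * M ^ 2 := by
      calc ∑ a : Fin n, (⨅ _ : Fin k, ‖X a - (0:H)‖ ^ 2)
          ≤ ∑ a : Fin n, M ^ 2 := by
            refine Finset.sum_le_sum fun a _ => ?_
            rw [ciInf_const, sub_zero]
            have := hXn a
            nlinarith [norm_nonneg (X a)]
        _ = (n:ℝ) * M ^ 2 := by simp [mul_comm]
      
    calc R ≤ (n:ℝ)⁻¹ * ((n:ℝ) * M ^ 2) := by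
          refine h0.trans (mul_le_mul_of_nonneg_left hbound (by positivity))
      _ = M ^ 2 := by field_simp
  have hsqrtR : Real.sqrt R ≤ M := by
    calc Real.sqrt R ≤ Real.sqrt (M ^ 2) := Real.sqrt_le_sqrt hRM
      _ = M := by rw [Real.sqrt_sq hM.le]
  have hnpm_pos : (0:ℝ) < (n:ℝ) * pm := by positivity
  have hs_pos : 0 < Real.sqrt ((n:ℝ) * pm) := Real.sqrt_pos.mpr hnpm_pos
  -- KEY estimate
  have hKEY : 2 * f * M / Real.sqrt ((n:ℝ) * pm) ≤ ‖cs i - cs j‖ := by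
    by_contra hlt
    push_neg at hlt
    have hD : Real.sqrt ((n:ℝ) * pm) * B < 2 * f * M := by
      have hB' : B < 2 * f * M / Real.sqrt ((n:ℝ) * pm) := lt_of_le_of_lt hBle hlt
      calc Real.sqrt ((n:ℝ) * pm) * B
          < Real.sqrt ((n:ℝ) * pm) * (2 * f * M / Real.sqrt ((n:ℝ) * pm)) :=
            mul_lt_mul_of_pos_left hB' hs_pos
        _ = 2 * f * M := by field_simp
    have hDpos : 0 < Real.sqrt ((n:ℝ) * pm) * B := mul_pos hs_pos hBpos
    set t := 16 * M ^ 2 * f / (Real.sqrt ((n:ℝ) * pm) * B) with htdef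
    have ht2M : 2 * M ≤ t := by
      have h8 : 16 * M ^ 2 * f / (2 * f * M) = 8 * M := by
        field_simp
        ring
      have hcmp : 16 * M ^ 2 * f / (2 * f * M) < 16 * M ^ 2 * f / (Real.sqrt ((n:ℝ) * pm) * B) :=
        div_lt_div_of_pos_left (by positivity) hDpos hD
      rw [h8] at hcmp
      rw [htdef]
      nlinarith
    -- the t-neighborhood of the skeleton has full mass
    have hpw : (1:ℝ) ≤ pweight P k t := by
      set m : H := (2⁻¹:ℝ) • (cs i + cs j) with hmdef
      have hmi : m - cs i = (2⁻¹:ℝ) • (cs j - cs i) := by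
        rw [hmdef]
        have h2 : ((2⁻¹:ℝ) + 2⁻¹) = 1 := by norm_num
        calc (2⁻¹:ℝ) • (cs i + cs j) - cs i
            = (2⁻¹:ℝ) • cs i + (2⁻¹:ℝ) • cs j - ((2⁻¹:ℝ) + 2⁻¹) • cs i := by
              rw [smul_add, h2, one_smul]
          _ = (2⁻¹:ℝ) • (cs j - cs i) := by rw [add_smul, smul_sub]; abel
      have hmj : m - cs j = (2⁻¹:ℝ) • (cs i - cs j) := by
        rw [hmdef]
        have h2 : ((2⁻¹:ℝ) + 2⁻¹) = 1 := by norm_num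
        calc (2⁻¹:ℝ) • (cs i + cs j) - cs j
            = (2⁻¹:ℝ) • cs i + (2⁻¹:ℝ) • cs j - ((2⁻¹:ℝ) + 2⁻¹) • cs j := by
              rw [smul_add, h2, one_smul]
          _ = (2⁻¹:ℝ) • (cs i - cs j) := by rw [add_smul, smul_sub]; abel
      have hmN : m ∈ Ncrit k cs := by
        rw [Ncrit]
        refine Set.mem_iUnion.mpr ⟨i, Set.mem_iUnion.mpr ⟨j, Set.mem_iUnion.mpr ⟨hij, ?_⟩⟩⟩
        show ‖m - cs i‖ = ‖m - cs j‖
        rw [hmi, hmj, norm_smul, norm_smul, norm_sub_rev]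
      have hmnorm : ‖m‖ ≤ M := by
        rw [hmdef]
        calc ‖(2⁻¹:ℝ) • (cs i + cs j)‖ = 2⁻¹ * ‖cs i + cs j‖ := by
              rw [norm_smul, Real.norm_eq_abs]; norm_num
          _ ≤ 2⁻¹ * (‖cs i‖ + ‖cs j‖) := by
              have := norm_add_le (cs i) (cs j)
              nlinarith
          _ ≤ M := by
              have h1 := hcs_ball i
              have h2 := hcs_ball j
              nlinarith
      set T := {x : H | infDist x (Ncrit k cs) ≤ t} with hTdef
      have hTmeas : MeasurableSet T := by
        have : IsClosed T := isClosed_le (continuous_infDist_pt _) continuous_const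
        exact this.measurableSet
      have hmemT : ∀ a : Fin n, X a ∈ T := by
        intro a
        rw [hTdef]
        show infDist (X a) (Ncrit k cs) ≤ t
        calc infDist (X a) (Ncrit k cs) ≤ dist (X a) m := infDist_le_dist_of_mem hmN
          _ = ‖X a - m‖ := by rw [dist_eq_norm]
          _ ≤ ‖X a‖ + ‖m‖ := norm_sub_le _ _
          _ ≤ 2 * M := by
              have := hXn a
              nlinarith
          _ ≤ t := ht2M
      have hT1 : (P T).toReal = 1 := by
        rw [hPdef, KAux.empMeasure_toReal hn hTmeas]
        have : (Finset.univ.filter fun a => X a ∈ T) = Finset.univ :=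
          Finset.filter_true_of_mem fun a _ => hmemT a
        rw [this]
        simp
        omega
      refine le_csSup_of_le ⟨1, ?_⟩ ⟨cs, hcs_opt, rfl⟩ hT1.symm.le
      rintro r ⟨c, hc, rfl⟩
      exact KAux.empMeasure_toReal_le_one hn _
    have hpm1 : (1:ℝ) ≤ pm := le_trans hpw h
    -- every point is in every cell
    have hall : ∀ (ℓ : Fin k) (a : Fin n), X a ∈ voronoi k cs ℓ := by
      intro ℓ a
      have h1 : pm ≤ (P (voronoi k cs ℓ)).toReal := hpm_le cs hcs_opt ℓ
      rw [hPdef, KAux.empMeasure_toReal hn (KAux.voronoi_measurable cs ℓ)] at h1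
      set s := Finset.univ.filter fun a => X a ∈ voronoi k cs ℓ with hsdef
      have hcard_le : s.card ≤ n := by
        calc s.card ≤ (Finset.univ : Finset (Fin n)).card := Finset.card_le_card
              (Finset.filter_subset _ _)
          _ = n := by simp
      have hcard_ge : (n:ℝ) ≤ (s.card : ℝ) := by
        have : (1:ℝ) ≤ (s.card : ℝ) / n := le_trans hpm1 h1
        calc (n:ℝ) = 1 * n := (one_mul _).symm
          _ ≤ ((s.card : ℝ) / n) * n := by
              exact mul_le_mul_of_nonneg_right this hnR.le
          _ = (s.card : ℝ) := by field_simp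
      have hcard_eq : s.card = n := le_antisymm hcard_le (by exact_mod_cast hcard_ge)
      have hseq : s = Finset.univ := Finset.eq_univ_of_card s (by simp [hcard_eq])
      have : a ∈ s := hseq ▸ Finset.mem_univ a
      exact (Finset.mem_filter.mp this).2
    have hstar : ∀ a : Fin n, ∃ m', m' ≠ j ∧ ∀ r, ‖X a - cs m'‖ ≤ ‖X a - cs r‖ :=
      fun a => ⟨i, hij, fun r => hall i a r⟩
    have := KAux.improve hk hn hcs_opt hstar
    rw [← hPdef] at this
    exact absurd (lt_of_lt_of_le hR0 this) (by norm_num)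
  -- conclude
  set Ni : ℝ := ((Finset.univ.filter fun a => X a ∈ voronoi k cs i).card : ℝ) with hNi
  set Nj : ℝ := ((Finset.univ.filter fun a => X a ∈ voronoi k cs j).card : ℝ) with hNj
  have hcell_bound : ∀ ℓ : Fin k,
      (n:ℝ) * pm ≤ ((Finset.univ.filter fun a => X a ∈ voronoi k cs ℓ).card : ℝ) := by
    intro ℓ
    have h1 : pm ≤ (P (voronoi k cs ℓ)).toReal := hpm_le cs hcs_opt ℓ
    rw [hPdef, KAux.empMeasure_toReal hn (KAux.voronoi_measurable cs ℓ)] at h1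
    calc (n:ℝ) * pm ≤ (n:ℝ) * (((Finset.univ.filter fun a => X a ∈ voronoi k cs ℓ).card : ℝ) / n) :=
          mul_le_mul_of_nonneg_left h1 hnR.le
      _ = _ := by field_simp
  have hinv : ∀ ℓ : Fin k,
      1 / Real.sqrt ((Finset.univ.filter fun a => X a ∈ voronoi k cs ℓ).card)
        ≤ 1 / Real.sqrt ((n:ℝ) * pm) := by
    intro ℓ
    exact one_div_le_one_div_of_le hs_pos (Real.sqrt_le_sqrt (hcell_bound ℓ))
  have hsum : 1 / Real.sqrt Ni + 1 / Real.sqrt Nj ≤ 2 / Real.sqrt ((n:ℝ) * pm) := by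
    have h1 := hinv i
    have h2 := hinv j
    rw [← hNi] at h1
    rw [← hNj] at h2
    have : (2:ℝ) / Real.sqrt ((n:ℝ) * pm)
        = 1 / Real.sqrt ((n:ℝ) * pm) + 1 / Real.sqrt ((n:ℝ) * pm) := by ring
    rw [this]
    exact add_le_add h1 h2
  have hnonneg : (0:ℝ) ≤ 1 / Real.sqrt Ni + 1 / Real.sqrt Nj := by positivity
  calc f * Real.sqrt R * (1 / Real.sqrt Ni + 1 / Real.sqrt Nj)
      ≤ f * M * (2 / Real.sqrt ((n:ℝ) * pm)) := by
        refine mul_le_mul ?_ hsum hnonneg (mul_nonneg hf.le hM.le)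
        exact mul_le_mul_of_nonneg_left hsqrtR hf.le
    _ = 2 * f * M / Real.sqrt ((n:ℝ) * pm) := by ring
    _ ≤ ‖cs i - cs j‖ := hKEY
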